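/- Let λ be a positive integer. Define the Boole polynomials Bl_n(x|λ) by the generating function ∑_{n≥0} Bl_n(x|λ) t^n/n! = (1+t)^x / (1 + (1+t)^λ) in ℚ[x][[t]]. Then for every m ≥ 0, ∑_{n=0}^{m} Bl_n(x|λ) S₂(m,n) = (1/2) λ^m E_m(x/λ), where E_m is the m-th Euler polynomial; equivalently, substituting t = e^t - 1 into the Boole generating function yields (2/(e^{λt}+1)) e^{xt} / 2. -/

import Mathlib

open Finset PowerSeries

/-- Stirling numbers of the second kind. -/
def stirling2 : ℕ → ℕ → ℕ
  | 0, 0 => 1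
  | 0, _ + 1 => 0
  | _ + 1, 0 => 0
  | n + 1, k + 1 => (k + 1) * stirling2 n (k + 1) + stirling2 n k

/-- Unsigned Stirling numbers of the first kind. -/
def stirling1 : ℕ → ℕ → ℕ
  | 0, 0 => 1
  | 0, _ + 1 => 0
  | _ + 1, 0 => 0
  | n + 1, k + 1 => n * stirling1 n (k + 1) + stirling1 n k

/-- Signed Stirling numbers of the first kind. -/
def s1 (n l : ℕ) : ℚ := (-1) ^ (n - l) * (stirling1 n l : ℚ)

/-- The exponential generating function `∑ a n * t^n / n!` as a power series over `ℚ`. -/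
noncomputable def egf (a : ℕ → ℚ) : PowerSeries ℚ :=
  PowerSeries.mk fun n => a n / (Nat.factorial n : ℚ)

/-- The binomial series `(1+t)^x = ∑ (x)_n t^n / n!` for `x : ℚ`. -/
noncomputable def onePlusTPow (x : ℚ) : PowerSeries ℚ :=
  egf fun n => ∏ i ∈ Finset.range n, (x - i)

/-- `e^{xt}` as a power series over `ℚ`. -/
noncomputable def expXT (x : ℚ) : PowerSeries ℚ := egf fun n => x ^ n

/-!
Substituting `t ↦ eᵗ - 1` is a ring endomorphism of `ℚ⟦t⟧` sending `1 + t` to `eᵗ`. Since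
`(eᵗ - 1)ⁿ / n! = ∑ₘ S₂(m, n) tᵐ / m!` (both sides satisfy the derivative form of the Stirling
recurrence), it maps the exponential generating function of `a` to that of its Stirling
transform `m ↦ ∑ₙ aₙ S₂(m, n)`; together with `xᵐ = ∑ₙ S₂(m, n) (x)ₙ` it maps `(1 + t)ˣ` to `eˣᵗ`.
Applied to the Boole relation this gives `egf S · (1 + e^{λt}) = eˣᵗ` for the Stirling transform
`S` of `Bl`, while rescaling `t ↦ λt` in the Euler relation at `x / λ` gives
`egf (λᵐ Eₘ(x/λ)) · (e^{λt} + 1) = 2 eˣᵗ`; cancelling `e^{λt} + 1` compares the two.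
-/

open scoped Nat
open Nat (stirlingSecond)

theorem stirling2_eq_stirlingSecond : stirling2 = Nat.stirlingSecond := by
  funext m n
  induction m generalizing n with
  | zero => cases n <;> rfl
  | succ m ih => cases n <;> simp [stirling2, Nat.stirlingSecond_succ_succ, ih]

theorem sum_prod_range_sub_mul_stirlingSecond {R : Type*} [CommRing R] (x : R) (m : ℕ) :
    ∑ n ∈ range (m + 1), (∏ i ∈ range n, (x - i)) * stirlingSecond m n = x ^ m := by
  induction m with
  | zero => simp
  | succ m ih =>
    set P : ℕ → R := fun n => ∏ i ∈ range n, (x - i)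
    set T : ℕ → R := fun n => n * P n * stirlingSecond m n
    have hstep : ∀ n, P (n + 1) * stirlingSecond (m + 1) (n + 1) =
        (T (n + 1) - T n) + x * (P n * stirlingSecond m n) := fun n => by
      simp only [P, T, prod_range_succ, Nat.stirlingSecond_succ_succ]
      push_cast
      ring
    have hT : T (m + 1) = 0 := by simp [T, Nat.stirlingSecond_eq_zero_of_lt (lt_add_one m)]
    rw [sum_range_succ', Nat.stirlingSecond_succ_zero, Nat.cast_zero, mul_zero, add_zero,
      sum_congr rfl fun n _ => hstep n, sum_add_distrib, sum_range_sub, ← mul_sum, ih, hT,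
      pow_succ']
    simp [T]

section ExpSubOne

variable {A : Type*} [CommRing A] [Algebra ℚ A]

variable (A) in
theorem hasSubst_exp_sub_one :
    HasSubst (exp A - 1) :=
  HasSubst.of_constantCoeff_zero' (by simp)

theorem factorial_mul_coeff_exp_sub_one_pow (m n : ℕ) :
    (m ! : A) * coeff m ((exp A - 1) ^ n) = n ! * stirlingSecond m n := by
  induction m generalizing n with
  | zero => cases n <;> simp
  | succ m ih =>
    cases n with
    | zero => simp [coeff_one]
    | succ k =>
      have hderiv : d⁄dX A ((exp A - 1) ^ (k + 1)) =
          (k + 1) • ((exp A - 1) ^ (k + 1) + (exp A - 1) ^ k) := by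
        rw [derivative_pow, map_sub, derivative_exp, Derivation.map_one_eq_zero, sub_zero,
          add_tsub_cancel_right, nsmul_eq_mul]
        push_cast
        ring
      have hcoeff := congrArg (coeff m) hderiv
      rw [coeff_derivative, map_nsmul, map_add, nsmul_eq_mul] at hcoeff
      have ih' := ih (k + 1)
      rw [Nat.stirlingSecond_succ_succ]
      push_cast [Nat.factorial_succ] at hcoeff ih' ⊢
      linear_combination (m ! : A) * hcoeff + (k + 1 : A) * (ih' + ih k)

theorem coeff_exp_sub_one_pow_of_lt {m n : ℕ} (h : m < n) : coeff m ((exp A - 1) ^ n) = 0 := by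
  obtain ⟨g, hg⟩ := X_dvd_iff.mpr (by simp : constantCoeff (exp A - 1) = 0)
  rw [hg, mul_pow, coeff_X_pow_mul', if_neg h.not_ge]

theorem factorial_mul_coeff_subst_exp_sub_one (f : A⟦X⟧) (m : ℕ) :
    (m ! : A) * coeff m (f.subst (exp A - 1)) =
      ∑ n ∈ range (m + 1), n ! * coeff n f * stirlingSecond m n := by
  rw [coeff_subst' (hasSubst_exp_sub_one A), finsum_eq_sum_of_support_subset (s := range (m + 1)),
    mul_sum]
  · refine sum_congr rfl fun n _ => ?_
    rw [smul_eq_mul, mul_left_comm, factorial_mul_coeff_exp_sub_one_pow]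
    ring
  · intro n hn
    by_contra hnm
    simp_all [coeff_exp_sub_one_pow_of_lt]

end ExpSubOne

@[simp]
theorem coeff_egf (a : ℕ → ℚ) (n : ℕ) : coeff n (egf a) = a n / n ! := coeff_mk _ _

theorem subst_exp_sub_one_egf (a : ℕ → ℚ) :
    (egf a).subst (exp ℚ - 1) =
      egf fun m => ∑ n ∈ range (m + 1), a n * stirlingSecond m n := by
  ext m
  rw [coeff_egf, eq_div_iff (by positivity), mul_comm, factorial_mul_coeff_subst_exp_sub_one]
  refine sum_congr rfl fun n _ => ?_
  rw [coeff_egf, mul_div_cancel₀ _ (by positivity)]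

theorem subst_exp_sub_one_onePlusTPow (x : ℚ) :
    (onePlusTPow x).subst (exp ℚ - 1) = expXT x := by
  simp only [onePlusTPow, subst_exp_sub_one_egf, sum_prod_range_sub_mul_stirlingSecond, expXT]

theorem C_mul_egf (c : ℚ) (a : ℕ → ℚ) : C c * egf a = egf fun m => c * a m := by
  ext m
  simp [mul_div_assoc]

theorem rescale_egf (c : ℚ) (a : ℕ → ℚ) : rescale c (egf a) = egf fun m => c ^ m * a m := by
  ext m
  simp [mul_div_assoc]

theorem rescale_expXT (c y : ℚ) : rescale c (expXT y) = expXT (c * y) := by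
  simp only [expXT, rescale_egf, mul_pow]

theorem expXT_one : expXT 1 = exp ℚ := by
  ext m
  simp [expXT]

theorem exp_pow_eq_expXT (L : ℕ) : exp ℚ ^ L = expXT L := by
  rw [exp_pow_eq_rescale_exp, ← expXT_one, rescale_expXT, mul_one]

theorem expXT_add_one_ne_zero (y : ℚ) : expXT y + 1 ≠ 0 := by
  intro h
  have h0 := congrArg (coeff 0) h
  rw [map_add, expXT, coeff_egf, coeff_one, if_pos rfl, map_zero] at h0
  norm_num at h0

theorem egf_injective : Function.Injective egf := by
  intro a b h
  funext m
  simpa [(Nat.factorial_pos m).ne'] using congrArg (coeff m) h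

theorem boole_stirling2_eq_euler (L : ℕ) (hL : 0 < L) (x : ℚ) (Bl : ℕ → ℚ) (E : ℕ → ℚ → ℚ)
    (hBl : egf Bl * (1 + (1 + PowerSeries.X) ^ L) = onePlusTPow x)
    (hE : ∀ y : ℚ, egf (fun m => E m y) * (PowerSeries.exp ℚ + 1) = 2 * expXT y)
    (m : ℕ) :
    ∑ n ∈ Finset.range (m + 1), Bl n * (stirling2 m n : ℚ) =
      (1 / 2) * (L : ℚ) ^ m * E m (x / L) := by
  set S : ℕ → ℚ := fun m => ∑ n ∈ range (m + 1), Bl n * (stirling2 m n : ℚ)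
  have hBoole : egf S * (expXT L + 1) = expXT x := by
    have h := congrArg (substAlgHom (hasSubst_exp_sub_one ℚ)) hBl
    simp only [map_mul, map_add, map_one, map_pow, substAlgHom_X, coe_substAlgHom,
      subst_exp_sub_one_egf, subst_exp_sub_one_onePlusTPow, add_sub_cancel, exp_pow_eq_expXT,
      ← stirling2_eq_stirlingSecond] at h
    rwa [add_comm] at h
  have hEuler : egf (fun m => (L : ℚ) ^ m * E m (x / L)) * (expXT L + 1) = 2 * expXT x := by
    have h := congrArg (rescale (L : ℚ)) (hE (x / L))
    rwa [map_mul, map_add, map_one, rescale_egf, ← expXT_one, rescale_expXT, mul_one, map_mul,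
      map_ofNat, rescale_expXT, mul_div_cancel₀ _ (by exact_mod_cast hL.ne')] at h
  have key : egf (fun m => (L : ℚ) ^ m * E m (x / L)) = egf fun m => 2 * S m := by
    refine mul_right_cancel₀ (expXT_add_one_ne_zero L) ?_
    rw [hEuler, ← hBoole, ← C_mul_egf, map_ofNat, mul_assoc]
  have hm := congrFun (egf_injective key) m
  linarith
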